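/- arXiv:1707.09477 — 2 statements merged into one kernel-verified Lean document; each statement's English description precedes it below -/
import Mathlib

section
/- For every integer k ≥ 1, ∑_{n=1}^{F_{2k} − 1} ⌊φ n⌋³ = (1/4)(F_{2k−1} − 1)(F_{2k+1} − 1)²(F_{2k+2} − 1). -/
/-!
Write `a m = ⌊m φ⌋`. Since `φ F_n = F_{n+1} - ψ^n` and the Fibonacci convergents are best
approximations (`|ψ|^j ≤ |m φ - p|` for `0 < m < F_{j+1}`), the values of `a` on
`(F_{j+2}, F_{j+3})` are those on `(0, F_{j+1})` shifted by `F_{j+3}`, and on `(0, F_{j+1})` they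
are symmetric: `a m + a (F_{j+1} - m) = F_{j+2} - 1`. The symmetry kills the odd centred moments,
which gives `∑ a` and expresses `∑ a³` through `∑ a²`; the shift gives a recursion for `∑ a²`,
solved in closed form. Cassini's identity `F_{n+1}² - F_{n+1} F_n - F_n² = (-1)^n` settles all the
remaining polynomial identities.
-/

open Finset Real goldenRatio
open Nat (fib)

section FloorRing

variable {R : Type*} [CommRing R] [LinearOrder R] [IsStrictOrderedRing R] [FloorRing R] {x ε : R}

lemma floor_lt_add_lt_floor_add_one (h : ∀ p : ℤ, |ε| < |x - p|) :
    (⌊x⌋ : R) < x + ε ∧ x + ε < ⌊x⌋ + 1 := by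
  have h₀ := Int.floor_le x
  have h₁ := Int.lt_floor_add_one x
  have hfl := h ⌊x⌋
  have hcl := h (⌊x⌋ + 1)
  rw [abs_of_nonneg (sub_nonneg.2 h₀)] at hfl
  rw [abs_of_neg (a := x - (⌊x⌋ + 1 : ℤ)) (by push_cast; linarith)] at hcl
  push_cast at hcl
  constructor <;> linarith [neg_abs_le ε, le_abs_self ε]

lemma floor_add_eq_floor (h : ∀ p : ℤ, |ε| < |x - p|) : ⌊x + ε⌋ = ⌊x⌋ :=
  Int.floor_eq_iff.2 ⟨(floor_lt_add_lt_floor_add_one h).1.le, (floor_lt_add_lt_floor_add_one h).2⟩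

lemma floor_add_floor_sub_add (h : ∀ p : ℤ, |ε| < |x - p|) (N : ℤ) :
    ⌊x⌋ + ⌊N - (x + ε)⌋ = N - 1 := by
  obtain ⟨h₀, h₁⟩ := floor_lt_add_lt_floor_add_one h
  rw [← eq_sub_iff_add_eq', Int.floor_eq_iff]
  push_cast
  constructor <;> linarith

end FloorRing

lemma Finset.sum_Icc_one_add_one_add {M : Type*} [AddCommMonoid M] (f : ℕ → M) (A B : ℕ) :
    ∑ m ∈ Icc 1 (A + 1 + B), f m =
      ∑ m ∈ Icc 1 A, f m + f (A + 1) + ∑ m ∈ Icc 1 B, f (A + 1 + m) := by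
  induction B with
  | zero => simp [sum_Icc_succ_top]
  | succ B ih =>
    rw [← add_assoc, sum_Icc_succ_top (by omega), ih, sum_Icc_succ_top (by omega)]
    simp only [add_assoc]

lemma Finset.sum_add_const_sq {ι R : Type*} [CommSemiring R] (s : Finset ι) (f : ι → R) (c : R) :
    ∑ i ∈ s, (f i + c) ^ 2 = ∑ i ∈ s, f i ^ 2 + 2 * c * ∑ i ∈ s, f i + #s * c ^ 2 := by
  simp only [add_sq, sum_add_distrib, ← sum_mul, ← mul_sum, sum_const, nsmul_eq_mul]
  ring

lemma Finset.sum_sub_const_pow_three {ι R : Type*} [CommRing R] (s : Finset ι) (f : ι → R)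
    (c : R) : ∑ i ∈ s, (f i - c) ^ 3 =
      ∑ i ∈ s, f i ^ 3 - 3 * c * ∑ i ∈ s, f i ^ 2 + 3 * c ^ 2 * ∑ i ∈ s, f i - #s * c ^ 3 := by
  have (y : R) : (y - c) ^ 3 = y ^ 3 - 3 * c * y ^ 2 + 3 * c ^ 2 * y - c ^ 3 := by ring
  simp only [this, sum_sub_distrib, sum_add_distrib, ← mul_sum, sum_const, nsmul_eq_mul]

lemma abs_goldenConj_lt_one : |ψ| < 1 :=
  abs_lt.2 ⟨neg_one_lt_goldenConj, goldenConj_neg.trans one_pos⟩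

lemma goldenConj_sq_le_half : ψ ^ 2 ≤ 1 / 2 := by
  have : (2 : ℝ) ≤ √5 := (Real.le_sqrt (by norm_num) (by norm_num)).2 (by norm_num)
  rw [goldenConj_sq]
  change (1 - √5) / 2 + 1 ≤ 1 / 2
  linarith

lemma goldenRatio_mul_fib (n : ℕ) : φ * fib n = fib (n + 1) - ψ ^ n := by
  linarith [fib_succ_sub_goldenRatio_mul_fib n]

lemma fib_succ_sq_sub_fib_succ_mul_fib_sub_fib_sq (n : ℕ) :
    (fib (n + 1) : ℝ) ^ 2 - fib (n + 1) * fib n - fib n ^ 2 = (-1) ^ n :=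
  calc _ = (fib (n + 1) - φ * fib n) * (fib (n + 1) - ψ * fib n) := by
        linear_combination (fib (n + 1) * fib n : ℝ) * goldenRatio_add_goldenConj
          - (fib n ^ 2 : ℝ) * goldenRatio_mul_goldenConj
    _ = (ψ * φ) ^ n := by
        rw [fib_succ_sub_goldenRatio_mul_fib, fib_succ_sub_goldenConj_mul_fib, mul_pow]
    _ = (-1) ^ n := by rw [goldenConj_mul_goldenRatio]

theorem abs_goldenConj_pow_le_abs_goldenRatio_mul_sub (j : ℕ) {m : ℕ} (h₀ : 0 < m)
    (hm : m < fib (j + 1)) (p : ℤ) : |ψ| ^ j ≤ |φ * m - p| := by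
  have hψ₀ : 0 ≤ |ψ| := abs_nonneg ψ
  have hψ₁ : |ψ| ≤ 1 := abs_goldenConj_lt_one.le
  induction j using Nat.twoStepInduction generalizing m p with
  | zero => simp at hm; omega
  | one => simp at hm; omega
  | more j ih₀ ih₁ =>
    by_cases hm₂ : m < fib (j + 2)
    · exact (pow_le_pow_of_le_one hψ₀ hψ₁ (by omega)).trans (ih₁ h₀ hm₂ p)
    obtain ⟨m', rfl⟩ : ∃ m', m = fib (j + 2) + m' := ⟨m - fib (j + 2), by omega⟩
    have hm' : m' < fib (j + 1) := by
      have : fib (j + 3) = fib (j + 1) + fib (j + 2) := Nat.fib_add_two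
      change _ < fib (j + 3) at hm
      omega
    set x := φ * m' - (p - fib (j + 3) : ℤ)
    have hx : φ * ↑(fib (j + 2) + m') - p = x - ψ ^ (j + 2) := by
      simp only [x]; push_cast; linear_combination goldenRatio_mul_fib (j + 2)
    -- the tail `m'` is either empty or shorter, so `x` is zero or already far from `ℤ`
    have hx' : x = 0 ∨ |ψ| ^ j ≤ |x| := by
      rcases m'.eq_zero_or_pos with rfl | hpos
      · obtain hq | hq := eq_or_ne (p - fib (j + 3) : ℤ) 0
        · simp [x, hq]
        · right
          have : (1 : ℝ) ≤ |((p - fib (j + 3) : ℤ) : ℝ)| := by exact_mod_cast Int.one_le_abs hq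
          simpa [x, abs_sub_comm] using (pow_le_one₀ hψ₀ hψ₁).trans this
      · exact .inr (ih₀ hpos hm' _)
    have hsmall : 2 * |ψ| ^ (j + 2) ≤ |ψ| ^ j := by
      have : |ψ| ^ 2 ≤ 1 / 2 := by rw [sq_abs]; exact goldenConj_sq_le_half
      rw [pow_add]; nlinarith [pow_nonneg hψ₀ j]
    rw [hx]
    rcases hx' with hx' | hx'
    · simp [hx', abs_pow]
    · have := abs_sub_abs_le_abs_sub x (ψ ^ (j + 2))
      rw [abs_pow] at this
      linarith

lemma abs_goldenConj_pow_lt_abs_goldenRatio_mul_sub {j k m : ℕ} (hjk : j < k) (h₀ : 0 < m)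
    (hm : m < fib (j + 1)) (p : ℤ) : |ψ ^ k| < |φ * m - p| := by
  rw [abs_pow]
  exact (pow_lt_pow_right_of_lt_one₀ (abs_pos.2 goldenConj_ne_zero) abs_goldenConj_lt_one
    hjk).trans_le (abs_goldenConj_pow_le_abs_goldenRatio_mul_sub j h₀ hm p)

noncomputable def lowerWythoff (n : ℕ) : ℤ := ⌊φ * n⌋

lemma lowerWythoff_fib_add {j m : ℕ} (h₀ : 0 < m) (hm : m < fib (j + 1)) :
    lowerWythoff (fib (j + 2) + m) = lowerWythoff m + fib (j + 3) := by
  have : φ * ↑(fib (j + 2) + m) = φ * m + -ψ ^ (j + 2) + fib (j + 3) := by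
    push_cast; linear_combination goldenRatio_mul_fib (j + 2)
  rw [lowerWythoff, this, Int.floor_add_natCast, floor_add_eq_floor, lowerWythoff]
  simpa using abs_goldenConj_pow_lt_abs_goldenRatio_mul_sub (by omega) h₀ hm

lemma lowerWythoff_add_lowerWythoff_fib_sub {j m : ℕ} (h₀ : 0 < m) (hm : m < fib (j + 1)) :
    lowerWythoff m + lowerWythoff (fib (j + 1) - m) = fib (j + 2) - 1 := by
  have : φ * ↑(fib (j + 1) - m) = ((fib (j + 2) : ℤ) : ℝ) - (φ * m + ψ ^ (j + 1)) := by
    push_cast [Nat.cast_sub hm.le]; linear_combination goldenRatio_mul_fib (j + 1)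
  rw [lowerWythoff, lowerWythoff, this, floor_add_floor_sub_add]
  exact abs_goldenConj_pow_lt_abs_goldenRatio_mul_sub (lt_add_one j) h₀ hm

lemma lowerWythoff_fib (k : ℕ) :
    (lowerWythoff (fib k) : ℝ) = fib (k + 1) - (1 + (-1) ^ k) / 2 := by
  rw [lowerWythoff, goldenRatio_mul_fib]
  rcases k.even_or_odd with hk | hk
  · have : 0 < ψ ^ k := hk.pow_pos goldenConj_ne_zero
    have : ψ ^ k ≤ 1 := hk.pow_abs ψ ▸ pow_le_one₀ (abs_nonneg ψ) abs_goldenConj_lt_one.le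
    rw [hk.neg_one_pow, show ⌊(fib (k + 1) : ℝ) - ψ ^ k⌋ = fib (k + 1) - 1 from
      Int.floor_eq_iff.2 ⟨by push_cast; linarith, by push_cast; linarith⟩]
    push_cast; ring
  · have hneg : ψ ^ k < 0 := hk.pow_neg goldenConj_neg
    have : |ψ ^ k| < 1 := abs_pow ψ k ▸
      pow_lt_one₀ (abs_nonneg ψ) abs_goldenConj_lt_one (by rintro rfl; simp at hk)
    rw [abs_of_neg hneg] at this
    rw [hk.neg_one_pow, show ⌊(fib (k + 1) : ℝ) - ψ ^ k⌋ = fib (k + 1) from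
      Int.floor_eq_iff.2 ⟨by push_cast; linarith, by push_cast; linarith⟩]
    push_cast; ring

section Sums

variable {M : Type*} [AddCommMonoid M]

lemma sum_lowerWythoff_Icc_fib_add_three (g : ℤ → M) (j : ℕ) :
    ∑ m ∈ Icc 1 (fib (j + 3) - 1), g (lowerWythoff m) =
      ∑ m ∈ Icc 1 (fib (j + 2) - 1), g (lowerWythoff m) + g (lowerWythoff (fib (j + 2))) +
        ∑ m ∈ Icc 1 (fib (j + 1) - 1), g (lowerWythoff m + fib (j + 3)) := by
  have h₁ : 0 < fib (j + 1) := Nat.fib_pos.2 (by omega)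
  have h₂ : 0 < fib (j + 2) := Nat.fib_pos.2 (by omega)
  have h₃ : fib (j + 3) = fib (j + 1) + fib (j + 2) := Nat.fib_add_two
  rw [show fib (j + 3) - 1 = fib (j + 2) - 1 + 1 + (fib (j + 1) - 1) by omega,
    sum_Icc_one_add_one_add, Nat.sub_add_cancel h₂]
  refine congrArg _ (sum_congr rfl fun m hm => ?_)
  rw [mem_Icc] at hm
  rw [lowerWythoff_fib_add (by omega) (by omega)]

lemma sum_lowerWythoff_Icc_fib_reflect (g : ℤ → M) (j : ℕ) :
    ∑ m ∈ Icc 1 (fib (j + 1) - 1), g (lowerWythoff m) =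
      ∑ m ∈ Icc 1 (fib (j + 1) - 1), g (fib (j + 2) - 1 - lowerWythoff m) := by
  refine sum_nbij' (fib (j + 1) - ·) (fib (j + 1) - ·) ?_ ?_ ?_ ?_ fun m hm => ?_
  any_goals intro m hm; simp only [mem_Icc] at hm ⊢; omega
  rw [mem_Icc] at hm
  rw [← lowerWythoff_add_lowerWythoff_fib_sub (j := j) (m := m) (by omega) (by omega)]
  ring_nf

end Sums

lemma natCast_card_Icc_one_fib_sub_one (j : ℕ) :
    (#(Icc 1 (fib (j + 1) - 1)) : ℝ) = fib (j + 1) - 1 := by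
  rw [Nat.card_Icc, Nat.add_sub_cancel, Nat.cast_pred (Nat.fib_pos.2 j.succ_pos)]

lemma sum_lowerWythoff_sub_pow_of_odd {p : ℕ} (hp : Odd p) (j : ℕ) :
    ∑ m ∈ Icc 1 (fib (j + 1) - 1), ((lowerWythoff m : ℝ) - (fib (j + 2) - 1) / 2) ^ p = 0 := by
  have h := sum_lowerWythoff_Icc_fib_reflect (fun t : ℤ => ((t : ℝ) - (fib (j + 2) - 1) / 2) ^ p) j
  have hneg (t : ℝ) : (fib (j + 2) - 1 - t - (fib (j + 2) - 1) / 2) ^ p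
      = -(t - (fib (j + 2) - 1) / 2) ^ p := by
    rw [← hp.neg_pow]; ring_nf
  simp only [Int.cast_sub, Int.cast_natCast, Int.cast_one, hneg, sum_neg_distrib] at h
  linarith

lemma sum_lowerWythoff_Icc_fib (j : ℕ) :
    ∑ m ∈ Icc 1 (fib (j + 1) - 1), (lowerWythoff m : ℝ) =
      (fib (j + 1) - 1) * (fib (j + 2) - 1) / 2 := by
  have h := sum_lowerWythoff_sub_pow_of_odd odd_one j
  simp only [pow_one, sum_sub_distrib, sum_const, nsmul_eq_mul,
    natCast_card_Icc_one_fib_sub_one] at h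
  linarith

lemma sum_lowerWythoff_pow_three_Icc_fib (j : ℕ) :
    ∑ m ∈ Icc 1 (fib (j + 1) - 1), (lowerWythoff m : ℝ) ^ 3 =
      3 * (fib (j + 2) - 1) / 2 * ∑ m ∈ Icc 1 (fib (j + 1) - 1), (lowerWythoff m : ℝ) ^ 2
        - (fib (j + 1) - 1) * (fib (j + 2) - 1) ^ 3 / 4 := by
  have h := sum_lowerWythoff_sub_pow_of_odd (by decide : Odd 3) j
  rw [sum_sub_const_pow_three, natCast_card_Icc_one_fib_sub_one, sum_lowerWythoff_Icc_fib] at h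
  linear_combination h

lemma sum_lowerWythoff_sq_Icc_fib (j : ℕ) :
    6 * ∑ m ∈ Icc 1 (fib (j + 1) - 1), (lowerWythoff m : ℝ) ^ 2 =
      (fib (j + 1) - 1) * fib (j + 1) * (fib (j + 1) + 1)
        + (fib (j + 2) - 2) * (fib (j + 2) - 1) * fib (j + 2)
        - 3 * (fib (j + 1) - 1) * (fib (j + 2) - 1) := by
  induction j using Nat.twoStepInduction with
  | zero => norm_num
  | one => norm_num
  | more j ih₀ ih₁ =>
    rw [show j + 1 + 1 = j + 2 from rfl, show j + 1 + 2 = j + 3 from rfl] at ih₁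
    rw [show j + 2 + 1 = j + 3 from rfl, show j + 2 + 2 = j + 4 from rfl,
      sum_lowerWythoff_Icc_fib_add_three (fun t : ℤ => (t : ℝ) ^ 2)]
    push_cast
    rw [sum_add_const_sq, lowerWythoff_fib, sum_lowerWythoff_Icc_fib,
      natCast_card_Icc_one_fib_sub_one]
    have h₃ : (fib (j + 3) : ℝ) = fib (j + 1) + fib (j + 2) := by
      rw [Nat.fib_add_two, Nat.cast_add]
    have h₄ : (fib (j + 4) : ℝ) = fib (j + 1) + 2 * fib (j + 2) := by
      rw [Nat.fib_add_two (n := j + 2), Nat.cast_add, h₃]; ring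
    have hcas := fib_succ_sq_sub_fib_succ_mul_fib_sub_fib_sq (j + 1)
    have hs : ((-1 : ℝ) ^ j) ^ 2 = 1 := by rw [← pow_mul, pow_mul']; norm_num
    simp only [h₃, h₄] at ih₁ ⊢
    linear_combination ih₀ + ih₁ + (3 - 6 * fib (j + 1) - 6 * fib (j + 2) : ℝ) * hcas
      + (3 / 2) * hs

theorem A_even_three_general (k : ℕ) :
    (∑ n ∈ Finset.Icc 1 (Nat.fib (2 * k) - 1), (⌊(1 + Real.sqrt 5) / 2 * (n : ℝ)⌋ : ℝ) ^ 3) =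
      (1 / 4) * ((Nat.fib (2 * k - 1) : ℝ) - 1) * ((Nat.fib (2 * k + 1) : ℝ) - 1) ^ 2 *
        ((Nat.fib (2 * k + 2) : ℝ) - 1) := by
  rcases k with _ | j
  · simp
  rw [show 2 * (j + 1) - 1 = 2 * j + 1 by omega, show 2 * (j + 1) = 2 * j + 1 + 1 by ring]
  change ∑ n ∈ Icc 1 (fib (2 * j + 1 + 1) - 1), (lowerWythoff n : ℝ) ^ 3 = _
  have h₁ : (fib (2 * j + 1) : ℝ) = fib (2 * j + 3) - fib (2 * j + 2) := by
    rw [Nat.fib_add_two, Nat.cast_add]; ring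
  have h₄ : (fib (2 * j + 4) : ℝ) = fib (2 * j + 2) + fib (2 * j + 3) := by
    rw [Nat.fib_add_two, Nat.cast_add]
  have hcas := fib_succ_sq_sub_fib_succ_mul_fib_sub_fib_sq (2 * j + 2)
  rw [Even.neg_one_pow ⟨j + 1, by ring⟩] at hcas
  rw [sum_lowerWythoff_pow_three_Icc_fib, h₁, h₄]
  linear_combination (fib (2 * j + 3) - 1 : ℝ) / 4 * sum_lowerWythoff_sq_Icc_fib (2 * j + 1)
    - (fib (2 * j + 2) - 1 : ℝ) * (fib (2 * j + 3) - 1) / 4 * hcas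

theorem A_even_three (k : ℕ) (hk : 1 ≤ k) :
    (∑ n ∈ Finset.Icc 1 (Nat.fib (2 * k) - 1), (⌊(1 + Real.sqrt 5) / 2 * (n : ℝ)⌋ : ℝ) ^ 3) =
      (1 / 4) * ((Nat.fib (2 * k - 1) : ℝ) - 1) * ((Nat.fib (2 * k + 1) : ℝ) - 1) ^ 2 *
        ((Nat.fib (2 * k + 2) : ℝ) - 1) :=
  A_even_three_general k
end

section
/- For every odd integer k ≥ 1, lcm(A(2k,1), A'(2k,1)) = (1/2) F_{k+2} F_{k+1} F_{k−1} L_{k+1} L_k, where A(m,1) := ∑_{n=1}^{F_m − 1} ⌊φ n⌋ and A'(m,1) := ∑_{n=1}^{F_m − 1} ⌊φ² n⌋. -/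
def lucas : ℕ → ℕ
  | 0 => 2
  | 1 => 1
  | n + 2 => lucas (n + 1) + lucas n

noncomputable def A (m : ℕ) : ℤ := ∑ n ∈ Finset.Icc 1 (Nat.fib m - 1), ⌊(1 + Real.sqrt 5) / 2 * (n : ℝ)⌋

noncomputable def A' (m : ℕ) : ℤ :=
  ∑ n ∈ Finset.Icc 1 (Nat.fib m - 1), ⌊((1 + Real.sqrt 5) / 2) ^ 2 * (n : ℝ)⌋

/-!
For `0 < n < F_m` the point `n φ` lies at distance more than `|ψ| ^ m` from every integer `p`:
the norm `(p - n φ) (p - n ψ) = p² - p n - n²` is a nonzero integer, while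
`|p - n ψ| ≤ |p - n φ| + n √5 ≤ |p - n φ| + φ ^ m + |ψ| ^ m - √5` and `φ ^ m |ψ| ^ m = 1`, so
`|p - n φ| ≤ |ψ| ^ m` would make the norm smaller than `1`.
Since `φ F_m = F_{m+1} - ψ ^ m`, this gives `⌊n φ⌋ + ⌊(F_m - n) φ⌋ = F_{m+1} - 1`, so pairing `n`
with `F_m - n` yields `2 A(m) = (F_m - 1) (F_{m+1} - 1)`, and `φ² = φ + 1` yields
`2 A'(m) = (F_m - 1) (F_{m+2} - 1)`. For odd `k`, Binet's formulas factor `F_{2k} - 1`,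
`F_{2k+1} - 1` and `F_{2k+2} - 1` into Fibonacci and Lucas numbers, leaving the lcm of the
two coprime factors `F_{k+1}` and `F_{k+2}`.
-/

open Finset Real
open scoped goldenRatio

theorem coe_lucas_eq : ∀ n, (lucas n : ℝ) = φ ^ n + ψ ^ n
  | 0 => by norm_num [lucas]
  | 1 => by simp [lucas]
  | n + 2 => by
    rw [lucas, Nat.cast_add, coe_lucas_eq (n + 1), coe_lucas_eq n]
    linear_combination -(φ ^ n * goldenRatio_sq + ψ ^ n * goldenConj_sq)

theorem neg_one_pow_eq_goldenRatio_pow_mul_goldenConj_pow (n : ℕ) :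
    (-1 : ℝ) ^ n = φ ^ n * ψ ^ n := by
  rw [← mul_pow, goldenRatio_mul_goldenConj]

theorem fib_add_mul_lucas (m n : ℕ) :
    (Nat.fib (n + m) * lucas n : ℤ) = Nat.fib (2 * n + m) + (-1) ^ n * Nat.fib m := by
  suffices (Nat.fib (n + m) * lucas n : ℝ) = Nat.fib (2 * n + m) + (-1) ^ n * Nat.fib m by
    exact_mod_cast this
  simp only [coe_lucas_eq, coe_fib_eq, neg_one_pow_eq_goldenRatio_pow_mul_goldenConj_pow]
  field_simp
  ring

theorem lucas_add_mul_fib (m n : ℕ) :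
    (lucas (n + m) * Nat.fib n : ℤ) = Nat.fib (2 * n + m) - (-1) ^ n * Nat.fib m := by
  suffices (lucas (n + m) * Nat.fib n : ℝ) = Nat.fib (2 * n + m) - (-1) ^ n * Nat.fib m by
    exact_mod_cast this
  simp only [coe_lucas_eq, coe_fib_eq, neg_one_pow_eq_goldenRatio_pow_mul_goldenConj_pow]
  field_simp
  ring

theorem one_le_abs_sub_mul_goldenRatio_mul_sub_mul_goldenConj (p n : ℤ) (hn : n ≠ 0) :
    1 ≤ |(p - n * φ) * (p - n * ψ)| := by
  have hnorm : (p - n * φ) * (p - n * ψ) = ((p ^ 2 - p * n - n ^ 2 : ℤ) : ℝ) := by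
    push_cast
    linear_combination
      (n : ℝ) ^ 2 * goldenRatio_mul_goldenConj - (p * n : ℝ) * goldenRatio_add_goldenConj
  have hne : p ^ 2 - p * n - n ^ 2 ≠ 0 := by
    intro h0
    rw [h0, Int.cast_zero, mul_eq_zero, sub_eq_zero, sub_eq_zero] at hnorm
    rcases hnorm with h | h
    · exact (goldenRatio_irrational.intCast_mul hn).ne_int p h.symm
    · exact (goldenConj_irrational.intCast_mul hn).ne_int p h.symm
  rw [hnorm, ← Int.cast_abs]
  exact_mod_cast Int.one_le_abs hne

theorem abs_goldenConj_pow_lt_abs_mul_goldenRatio_sub {m n : ℕ} (hn₀ : 0 < n)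
    (hn : n < Nat.fib m) (p : ℤ) : |ψ| ^ m < |n * φ - p| := by
  set c := |ψ| ^ m with hc
  by_contra! hδ
  have hc_pos : 0 < c := pow_pos (abs_pos.2 goldenConj_ne_zero) m
  have hc_le : c ≤ |ψ| := by
    have hm : m ≠ 0 := by rintro rfl; simp at hn
    exact pow_le_of_le_one (abs_nonneg _)
      (abs_le.2 ⟨neg_one_lt_goldenConj.le, goldenConj_neg.le.trans zero_le_one⟩) hm
  have hc_mul : c * φ ^ m = 1 := by
    rw [hc, abs_of_neg goldenConj_neg, ← inv_goldenRatio, ← mul_pow,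
      inv_mul_cancel₀ goldenRatio_ne_zero, one_pow]
  have hn_sqrt5 : n * √5 ≤ φ ^ m + c - √5 := by
    have hfib : (Nat.fib m : ℝ) * √5 = φ ^ m - ψ ^ m := by
      rw [coe_fib_eq]; field_simp
    have : -ψ ^ m ≤ c := by rw [hc, ← abs_pow]; exact neg_le_abs _
    have : (n : ℝ) + 1 ≤ Nat.fib m := by exact_mod_cast hn
    nlinarith [sqrt_nonneg 5]
  have hconj : |p - n * ψ| ≤ c + (φ ^ m + c - √5) := by
    calc |p - n * ψ| = |(p - n * φ) + n * √5| := by rw [← goldenRatio_sub_goldenConj]; ring_nf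
      _ ≤ |p - n * φ| + n * √5 := by
        refine (abs_add_le _ _).trans_eq ?_
        rw [abs_of_nonneg (by positivity : (0 : ℝ) ≤ n * √5)]
      _ ≤ c + (φ ^ m + c - √5) := by
        gcongr
        rwa [abs_sub_comm]
  have hnorm := calc (1 : ℝ) ≤ |(p - n * φ) * (p - n * ψ)| :=
        one_le_abs_sub_mul_goldenRatio_mul_sub_mul_goldenConj p n (by exact_mod_cast hn₀.ne')
    _ = |p - n * φ| * |p - n * ψ| := abs_mul _ _
    _ ≤ c * (c + (φ ^ m + c - √5)) := by
      gcongr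
      rwa [abs_sub_comm]
  have h2c : 2 * c < √5 := by
    rw [abs_of_neg goldenConj_neg] at hc_le
    linarith [goldenRatio_sub_goldenConj, goldenRatio_add_goldenConj]
  nlinarith [mul_lt_mul_of_pos_left h2c hc_pos]

theorem floor_goldenRatio_mul_add_floor_goldenRatio_mul_fib_sub {m n : ℕ} (hn₀ : 0 < n)
    (hn : n < Nat.fib m) :
    ⌊φ * n⌋ + ⌊φ * ↑(Nat.fib m - n)⌋ = Nat.fib (m + 1) - 1 := by
  have hlo : |ψ| ^ m < φ * n - ⌊φ * n⌋ := by
    have := abs_goldenConj_pow_lt_abs_mul_goldenRatio_sub hn₀ hn ⌊φ * n⌋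
    rwa [mul_comm, abs_of_nonneg (sub_nonneg.2 (Int.floor_le _))] at this
  have hhi : |ψ| ^ m < ⌊φ * n⌋ + 1 - φ * n := by
    have := abs_goldenConj_pow_lt_abs_mul_goldenRatio_sub hn₀ hn (⌊φ * n⌋ + 1)
    rwa [mul_comm, Int.cast_add, Int.cast_one, abs_sub_comm,
      abs_of_nonneg (sub_nonneg.2 (Int.lt_floor_add_one _).le)] at this
  have hφ_fib : φ * ↑(Nat.fib m - n) = Nat.fib (m + 1) - ψ ^ m - φ * n := by
    rw [Nat.cast_sub hn.le, ← fib_succ_sub_goldenRatio_mul_fib]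
    ring
  suffices ⌊φ * ↑(Nat.fib m - n)⌋ = Nat.fib (m + 1) - 1 - ⌊φ * n⌋ by rw [this]; ring
  rw [Int.floor_eq_iff, hφ_fib]
  push_cast
  constructor <;> linarith [le_abs_self (ψ ^ m), neg_abs_le (ψ ^ m), abs_pow ψ m]

theorem two_mul_sum_Icc_eq_of_add_reflect {f : ℕ → ℤ} {N : ℕ} {C : ℤ} (hN : 0 < N)
    (h : ∀ n, 0 < n → n < N → f n + f (N - n) = C) :
    2 * ∑ n ∈ Icc 1 (N - 1), f n = (N - 1) * C := by
  have hreflect : ∑ n ∈ Icc 1 (N - 1), f (N - n) = ∑ n ∈ Icc 1 (N - 1), f n := by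
    refine sum_nbij' (N - ·) (N - ·) ?_ ?_ ?_ ?_ fun _ _ => rfl
    all_goals intro n hn; simp only [mem_Icc] at hn ⊢; omega
  calc 2 * ∑ n ∈ Icc 1 (N - 1), f n = ∑ n ∈ Icc 1 (N - 1), (f n + f (N - n)) := by
        rw [sum_add_distrib, hreflect, two_mul]
    _ = ∑ n ∈ Icc 1 (N - 1), C := sum_congr rfl fun n hn => by
        simp only [mem_Icc] at hn; exact h n (by omega) (by omega)
    _ = (N - 1) * C := by simp [Nat.cast_sub hN]

theorem two_mul_sum_Icc_id {N : ℕ} (hN : 0 < N) :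
    2 * ∑ n ∈ Icc 1 (N - 1), (n : ℤ) = (N - 1) * N :=
  two_mul_sum_Icc_eq_of_add_reflect hN fun n _ hn => by push_cast [hn.le]; ring

theorem two_mul_A {m : ℕ} (hm : 0 < m) :
    2 * A m = (Nat.fib m - 1) * (Nat.fib (m + 1) - 1) :=
  two_mul_sum_Icc_eq_of_add_reflect (Nat.fib_pos.2 hm) fun _ hn₀ hn =>
    floor_goldenRatio_mul_add_floor_goldenRatio_mul_fib_sub hn₀ hn

theorem A'_eq_A_add_sum_Icc (m : ℕ) :
    A' m = A m + ∑ n ∈ Icc 1 (Nat.fib m - 1), (n : ℤ) := by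
  rw [A, A', ← sum_add_distrib]
  refine sum_congr rfl fun n _ => ?_
  rw [← Int.floor_add_intCast]
  congr 1
  push_cast
  rw [goldenRatio_sq]
  ring

theorem two_mul_A' {m : ℕ} (hm : 0 < m) :
    2 * A' m = (Nat.fib m - 1) * (Nat.fib (m + 2) - 1) := by
  rw [A'_eq_A_add_sum_Icc, mul_add, two_mul_A hm, two_mul_sum_Icc_id (Nat.fib_pos.2 hm),
    Nat.fib_add_two]
  push_cast
  ring

theorem two_mul_lcm_eq_of_coprime {a b : ℤ} {c x y : ℕ} (ha : 2 * a = c * x)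
    (hb : 2 * b = c * y) (hxy : x.Coprime y) : 2 * Int.lcm a b = c * x * y := by
  have h := Int.lcm_mul_left 2 a b
  rw [ha, hb, Int.lcm_mul_left, Int.lcm_natCast_natCast, hxy.lcm_eq_mul] at h
  simpa [mul_assoc] using h.symm

theorem lcm_A_odd_general (k : ℕ) (hko : Odd k) :
    (Int.lcm (A (2 * k)) (A' (2 * k)) : ℝ) =
      (1 / 2) * (Nat.fib (k + 2) : ℝ) * (Nat.fib (k + 1) : ℝ) * (Nat.fib (k - 1) : ℝ) *
        (lucas (k + 1) : ℝ) * (lucas k : ℝ) := by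
  have h2k : 0 < 2 * k := by have := hko.pos; omega
  have hsign : (-1 : ℤ) ^ k = -1 := hko.neg_one_pow
  have hfib_two_mul : (Nat.fib (2 * k) - 1 : ℤ) = lucas (k + 1) * Nat.fib (k - 1) := by
    have := lucas_add_mul_fib 2 (k - 1)
    rw [show k - 1 + 2 = k + 1 by omega, show 2 * (k - 1) + 2 = 2 * k by omega,
      (Nat.Odd.sub_odd hko odd_one).neg_one_pow] at this
    rw [this, Nat.fib_two]
    ring
  have hfib_two_mul_add_one : (Nat.fib (2 * k + 1) - 1 : ℤ) = Nat.fib (k + 1) * lucas k := by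
    rw [fib_add_mul_lucas 1 k, hsign, Nat.fib_one]; ring
  have hfib_two_mul_add_two : (Nat.fib (2 * k + 2) - 1 : ℤ) = Nat.fib (k + 2) * lucas k := by
    rw [fib_add_mul_lucas 2 k, hsign, Nat.fib_two]; ring
  set c := Nat.fib (k - 1) * lucas (k + 1) * lucas k with hc
  have hA : 2 * A (2 * k) = c * Nat.fib (k + 1) := by
    rw [two_mul_A h2k, hfib_two_mul, hfib_two_mul_add_one]; push_cast [hc]; ring
  have hA' : 2 * A' (2 * k) = c * Nat.fib (k + 2) := by
    rw [two_mul_A' h2k, hfib_two_mul, hfib_two_mul_add_two]; push_cast [hc]; ring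
  have hlcm := two_mul_lcm_eq_of_coprime hA hA' (Nat.fib_coprime_fib_succ (k + 1))
  have hlcm_real :
      (2 * Int.lcm (A (2 * k)) (A' (2 * k)) : ℝ) = c * Nat.fib (k + 1) * Nat.fib (k + 2) := by
    exact_mod_cast hlcm
  push_cast [hc] at hlcm_real
  linarith

theorem lcm_A_odd (k : ℕ) (hk : 1 ≤ k) (hko : Odd k) :
    (Int.lcm (A (2 * k)) (A' (2 * k)) : ℝ) =
      (1 / 2) * (Nat.fib (k + 2) : ℝ) * (Nat.fib (k + 1) : ℝ) * (Nat.fib (k - 1) : ℝ) *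
        (lucas (k + 1) : ℝ) * (lucas k : ℝ) :=
  lcm_A_odd_general k hko
end
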